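/- For positive definite n×n matrices A and B, d_h(A,B) ≤ √2 · d_b(A,B), where d_b(A,B) = (Tr(A+B) - 2Tr((A^(1/2)BA^(1/2))^(1/2)))^(1/2) and d_h(A,B) = (Tr(A+B) - 2Tr(A^(1/2)B^(1/2)))^(1/2). -/

import Mathlib

/-!
Squaring both sides, the claim becomes `4 Re Tr S ≤ Re Tr A + Re Tr B + 2 Re Tr (A^{1/2} B^{1/2})`
for `S = (A^{1/2} B A^{1/2})^{1/2}`. By polar decomposition `S = A^{1/2} B^{1/2} Wᴴ` with `W`
unitary. The inequality `2 Re Tr (Xᴴ Y) ≤ Tr (Xᴴ X) + Tr (Yᴴ Y)` applied to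
`X = A^{1/4} W B^{1/4}`, `Y = A^{1/4} B^{1/4}` gives
`2 Re Tr S ≤ Re Tr (Wᴴ A^{1/2} W B^{1/2}) + Re Tr (A^{1/2} B^{1/2})`, and applied to
`X = A^{1/2} W`, `Y = W B^{1/2}` it gives `2 Re Tr (Wᴴ A^{1/2} W B^{1/2}) ≤ Re Tr A + Re Tr B`.
-/

open Matrix ComplexOrder

/-- Matrix power via functional calculus (spectral decomposition), for Hermitian matrices. -/
noncomputable def mpow {n : Type*} [Fintype n] [DecidableEq n]
    (A : Matrix n n ℂ) (p : ℝ) : Matrix n n ℂ :=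
  if hA : A.IsHermitian then
    (hA.eigenvectorUnitary : Matrix n n ℂ) *
      Matrix.diagonal (fun i => ((hA.eigenvalues i ^ p : ℝ) : ℂ)) *
      star (hA.eigenvectorUnitary : Matrix n n ℂ)
  else 0

/-- Hellinger distance. -/
noncomputable def dh {n : Type*} [Fintype n] [DecidableEq n]
    (A B : Matrix n n ℂ) : ℝ :=
  Real.sqrt ((Matrix.trace (A + B)).re
    - 2 * (Matrix.trace (mpow A (1/2) * mpow B (1/2))).re)

/-- Bures–Wasserstein distance. -/
noncomputable def db {n : Type*} [Fintype n] [DecidableEq n]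
    (A B : Matrix n n ℂ) : ℝ :=
  Real.sqrt ((Matrix.trace (A + B)).re
    - 2 * (Matrix.trace (mpow (mpow A (1/2) * B * mpow A (1/2)) (1/2))).re)

/-- Log-determinant distance. -/
noncomputable def dl {n : Type*} [Fintype n] [DecidableEq n]
    (A B : Matrix n n ℂ) : ℝ :=
  Real.log (((A + B) / 2).det).re
    - (1/2) * (Real.log (A.det.re) + Real.log (B.det.re))

/-- Matrix power mean μ_p(t;A,B) = (t A^p + (1-t) B^p)^{1/p}. -/
noncomputable def mpm {n : Type*} [Fintype n] [DecidableEq n]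
    (p t : ℝ) (A B : Matrix n n ℂ) : Matrix n n ℂ :=
  mpow ((t : ℂ) • mpow A p + ((1 - t : ℝ) : ℂ) • mpow B p) (1/p)

/-- Weighted geometric mean A ♯_t B. -/
noncomputable def sharp {n : Type*} [Fintype n] [DecidableEq n]
    (t : ℝ) (A B : Matrix n n ℂ) : Matrix n n ℂ :=
  mpow A (1/2) * mpow (mpow A (-(1/2)) * B * mpow A (-(1/2))) t * mpow A (1/2)

/-- Quantum fidelity. -/
noncomputable def fid {n : Type*} [Fintype n] [DecidableEq n]
    (A B : Matrix n n ℂ) : ℝ :=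
  ((Matrix.trace (mpow (mpow A (1/2) * B * mpow A (1/2)) (1/2))).re) ^ 2

section MatrixPower

variable {n : Type*} [Fintype n] [DecidableEq n] {A : Matrix n n ℂ}

lemma mpow_of_isHermitian (hA : A.IsHermitian) (p : ℝ) :
    mpow A p = (hA.eigenvectorUnitary : Matrix n n ℂ) *
      diagonal (fun i => ((hA.eigenvalues i ^ p : ℝ) : ℂ)) *
      star (hA.eigenvectorUnitary : Matrix n n ℂ) :=
  dif_pos hA

lemma isHermitian_mpow (A : Matrix n n ℂ) (p : ℝ) : (mpow A p).IsHermitian := by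
  unfold mpow
  split_ifs with hA
  · exact isHermitian_mul_mul_conjTranspose _
      (isHermitian_diagonal_iff.mpr fun _ => Complex.conj_ofReal _)
  · exact isHermitian_zero

lemma mpow_zero (hA : A.IsHermitian) : mpow A 0 = 1 := by
  simp only [mpow_of_isHermitian hA, Real.rpow_zero, Complex.ofReal_one, diagonal_one, mul_one]
  exact mem_unitaryGroup_iff.mp hA.eigenvectorUnitary.2

lemma mpow_one (hA : A.IsHermitian) : mpow A 1 = A := by
  simp only [mpow_of_isHermitian hA, Real.rpow_one]
  exact hA.spectral_theorem.symm

lemma mpow_mul_mpow (hA : A.PosDef) (p q : ℝ) : mpow A p * mpow A q = mpow A (p + q) := by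
  simp only [mpow_of_isHermitian hA.1]
  set U := (hA.1.eigenvectorUnitary : Matrix n n ℂ)
  have hUU : star U * U = 1 := mem_unitaryGroup_iff'.mp hA.1.eigenvectorUnitary.2
  have hpow : ∀ i, ((hA.1.eigenvalues i ^ p : ℝ) : ℂ) * ((hA.1.eigenvalues i ^ q : ℝ) : ℂ)
      = ((hA.1.eigenvalues i ^ (p + q) : ℝ) : ℂ) := fun i => by
    rw [← Complex.ofReal_mul, ← Real.rpow_add (hA.eigenvalues_pos i)]
  rw [show ∀ P Q : Matrix n n ℂ,
      U * P * star U * (U * Q * star U) = U * (P * (star U * U) * Q) * star U by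
    intros; simp only [mul_assoc], hUU, mul_one, diagonal_mul_diagonal]
  simp only [hpow]

lemma mpow_half_mul_mpow_half (hA : A.PosDef) (p : ℝ) :
    mpow A (p / 2) * mpow A (p / 2) = mpow A p := by
  rw [mpow_mul_mpow hA, add_halves]

lemma mpow_mul_mpow_neg (hA : A.PosDef) (p : ℝ) : mpow A p * mpow A (-p) = 1 := by
  rw [mpow_mul_mpow hA, add_neg_cancel, mpow_zero hA.1]

lemma mpow_neg_mul_mpow (hA : A.PosDef) (p : ℝ) : mpow A (-p) * mpow A p = 1 := by
  rw [mpow_mul_mpow hA, neg_add_cancel, mpow_zero hA.1]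

lemma isUnit_mpow (hA : A.PosDef) (p : ℝ) : IsUnit (mpow A p) :=
  IsUnit.of_mul_eq_one _ (mpow_mul_mpow_neg hA p)

lemma exists_mem_unitaryGroup_mpow_mul_conjTranspose_self {X : Matrix n n ℂ} (hX : IsUnit X) :
    ∃ W ∈ unitaryGroup n ℂ, mpow (X * Xᴴ) (1 / 2) = X * Wᴴ := by
  have hM : (X * Xᴴ).PosDef := .mul_conjTranspose_self X (vecMul_injective_iff_isUnit.mpr hX)
  set S := mpow (X * Xᴴ) (1 / 2)
  set S' := mpow (X * Xᴴ) (-(1 / 2))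
  have hSS : S * S = X * Xᴴ := by
    rw [mpow_half_mul_mpow_half hM, mpow_one hM.1]
  have hstar : (S' * X)ᴴ = Xᴴ * S' := by
    rw [conjTranspose_mul, (isHermitian_mpow _ _).eq]
  refine ⟨S' * X, mem_unitaryGroup_iff.mpr ?_, ?_⟩
  · rw [star_eq_conjTranspose]
    calc S' * X * (S' * X)ᴴ = S' * (S * S) * S' := by rw [hstar, hSS]; simp only [mul_assoc]
      _ = 1 := by
        rw [← mul_assoc, mpow_neg_mul_mpow hM, one_mul, mpow_mul_mpow_neg hM]
  · calc S = S * S * S' := by rw [mul_assoc, mpow_mul_mpow_neg hM, mul_one]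
      _ = X * (S' * X)ᴴ := by rw [hSS, hstar, mul_assoc]

end MatrixPower

section TraceInequalities

variable {n : Type*} [Fintype n]

lemma two_mul_re_trace_conjTranspose_mul_le {m : Type*} [Fintype m] (X Y : Matrix m n ℂ) :
    2 * (trace (Xᴴ * Y)).re ≤ (trace (Xᴴ * X)).re + (trace (Yᴴ * Y)).re := by
  have hnonneg := Complex.nonneg_iff.mp (posSemidef_conjTranspose_mul_self (X - Y)).trace_nonneg
  have hswap : (trace (Yᴴ * X)).re = (trace (Xᴴ * Y)).re := by
    rw [← conjTranspose_conjTranspose X, ← conjTranspose_mul, trace_conjTranspose,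
      conjTranspose_conjTranspose]
    exact Complex.conj_re _
  simp only [conjTranspose_sub, Matrix.sub_mul, Matrix.mul_sub, trace_sub, Complex.sub_re]
    at hnonneg
  linarith [hnonneg.1]

lemma two_mul_re_trace_mul_sq_mul_sq_le {E F : Matrix n n ℂ} (hE : E.IsHermitian)
    (hF : F.IsHermitian) (W : Matrix n n ℂ) :
    2 * (trace (Wᴴ * (E * E) * (F * F))).re ≤
      (trace (Wᴴ * (E * E) * W * (F * F))).re + (trace (E * E * (F * F))).re := by
  have h := two_mul_re_trace_conjTranspose_mul_le (E * W * F) (E * F)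
  simp only [conjTranspose_mul, hE.eq, hF.eq, mul_assoc] at h
  simp only [trace_mul_comm F, mul_assoc] at h
  simpa only [mul_assoc] using h

lemma two_mul_re_trace_unitary_conj_mul_le [DecidableEq n] {C D W : Matrix n n ℂ}
    (hC : C.IsHermitian) (hD : D.IsHermitian) (hW : W ∈ unitaryGroup n ℂ) :
    2 * (trace (Wᴴ * C * W * D)).re ≤ (trace (C * C)).re + (trace (D * D)).re := by
  have hWW : W * Wᴴ = 1 := mem_unitaryGroup_iff.mp hW
  have hWW' : Wᴴ * W = 1 := mem_unitaryGroup_iff'.mp hW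
  have hCW : trace ((C * W)ᴴ * (C * W)) = trace (C * C) := by
    rw [conjTranspose_mul, hC.eq, mul_assoc, trace_mul_comm, mul_assoc, mul_assoc, hWW, mul_one]
  have hWD : trace ((W * D)ᴴ * (W * D)) = trace (D * D) := by
    rw [conjTranspose_mul, hD.eq, mul_assoc, ← mul_assoc Wᴴ, hWW', one_mul]
  have h := two_mul_re_trace_conjTranspose_mul_le (C * W) (W * D)
  rwa [hCW, hWD, conjTranspose_mul, hC.eq, ← mul_assoc] at h

end TraceInequalities

lemma four_mul_re_trace_mpow_half_le {n : Type*} [Fintype n] [DecidableEq n]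
    {A B : Matrix n n ℂ} (hA : A.PosDef) (hB : B.PosDef) :
    4 * (trace (mpow (mpow A (1 / 2) * B * mpow A (1 / 2)) (1 / 2))).re ≤
      (trace A).re + (trace B).re + 2 * (trace (mpow A (1 / 2) * mpow B (1 / 2))).re := by
  set C := mpow A (1 / 2)
  set D := mpow B (1 / 2)
  have hCC : C * C = A := by rw [mpow_half_mul_mpow_half hA, mpow_one hA.1]
  have hDD : D * D = B := by rw [mpow_half_mul_mpow_half hB, mpow_one hB.1]
  have hEE : mpow A (1 / 4) * mpow A (1 / 4) = C := by rw [mpow_mul_mpow hA]; norm_num [C]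
  have hFF : mpow B (1 / 4) * mpow B (1 / 4) = D := by rw [mpow_mul_mpow hB]; norm_num [D]
  have hCBC : C * D * (C * D)ᴴ = C * B * C := by
    rw [conjTranspose_mul, (isHermitian_mpow A _).eq, (isHermitian_mpow B _).eq, mul_assoc C D,
      ← mul_assoc D D, hDD, ← mul_assoc]
  obtain ⟨W, hW, hpolar⟩ := exists_mem_unitaryGroup_mpow_mul_conjTranspose_self
    ((isUnit_mpow hA (1 / 2)).mul (isUnit_mpow hB (1 / 2)))
  have hS := two_mul_re_trace_mul_sq_mul_sq_le (isHermitian_mpow A (1 / 4))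
    (isHermitian_mpow B (1 / 4)) W
  have hConj := two_mul_re_trace_unitary_conj_mul_le (isHermitian_mpow A (1 / 2))
    (isHermitian_mpow B (1 / 2)) hW
  rw [hEE, hFF] at hS
  rw [hCC, hDD] at hConj
  rw [← hCBC, hpolar, trace_mul_comm, ← mul_assoc]
  linarith

theorem stmt7 {n : Type*} [Fintype n] [DecidableEq n]
    {A B : Matrix n n ℂ} (hA : A.PosDef) (hB : B.PosDef) :
    dh A B ≤ Real.sqrt 2 * db A B := by
  rw [dh, db, ← Real.sqrt_mul zero_le_two, trace_add, Complex.add_re]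
  exact Real.sqrt_le_sqrt (by linarith [four_mul_re_trace_mpow_half_le hA hB])
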